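/- A field that is finitely generated as a ring (i.e., as a ℤ-algebra) cannot have characteristic zero. In particular, ℚ is not finitely generated as a ring, and no finite extension of ℚ is finitely generated as a ring. -/

import Mathlib

/-!
By the general Nullstellensatz, a field of finite type over a Jacobson ring `R` is a finite
`R`-module. The ring `ℤ` is Jacobson: it has dimension one and zero Jacobson radical. So such a
field `K` is integral over `ℤ`; if it had characteristic zero, `1 / 2 ∈ ℚ ⊆ K` would be an
integral rational number, hence an integer.
-/

theorem isJacobsonRing_of_jacobson_bot {R : Type*} [CommRing R] [Ring.DimensionLEOne R]
    (h : (⊥ : Ideal R).jacobson = ⊥) : IsJacobsonRing R := by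
  refine isJacobsonRing_iff_prime_eq.mpr fun P hP => ?_
  rcases eq_or_ne P ⊥ with rfl | hP₀
  · exact h
  · have := Ring.DimensionLEOne.maximalOfPrime hP₀ hP
    exact Ideal.jacobson_eq_self_of_isMaximal

theorem Int.jacobson_bot : (⊥ : Ideal ℤ).jacobson = ⊥ := by
  refine le_bot_iff.mp fun x hx => ?_
  -- `x * x + 1 = ±1` forces `x = 0`.
  rcases Int.isUnit_iff.mp (Ideal.mem_jacobson_bot.mp hx x) with h | h
  · simpa using h
  · nlinarith

instance Int.isJacobsonRing : IsJacobsonRing ℤ :=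
  isJacobsonRing_of_jacobson_bot Int.jacobson_bot

theorem Rat.not_isIntegral_int_inv_two : ¬ IsIntegral ℤ (2⁻¹ : ℚ) := by
  intro h
  obtain ⟨z, hz⟩ := IsIntegrallyClosed.isIntegral_iff.mp h
  have h2z : (2 * z : ℚ) = 1 := by
    rw [show (z : ℚ) = 2⁻¹ from hz]
    norm_num
  have : 2 * z = 1 := by exact_mod_cast h2z
  omega

theorem not_isIntegral_int_of_charZero (K : Type*) [Field K] [CharZero K] :
    ¬ Algebra.IsIntegral ℤ K := fun h =>
  Rat.not_isIntegral_int_inv_two <|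
    (isIntegral_algebraMap_iff (algebraMap ℚ K).injective).mp (h.isIntegral _)

/-- A field which is finitely generated as a ring (i.e. as a ℤ-algebra) cannot have
characteristic zero. -/
theorem not_charZero_of_field_finiteType
    (K : Type*) [Field K] [Algebra.FiniteType ℤ K] : ¬ CharZero K := by
  intro _
  have : Module.Finite ℤ K := finite_of_finite_type_of_isJacobsonRing ℤ K
  exact not_isIntegral_int_of_charZero K (Algebra.IsIntegral.of_finite ℤ K)
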